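/- In the random-permutation algorithm with independent uniformly random preference permutations $\sigma_1, \dots, \sigma_w$, for any two adjacent task sets $T_1, T_2 \subseteq [t]$ of size $w$, the probability that worker $i$ is assigned to different tasks in the two runs is at most $2/(w - i + 1)$, and hence the expected number of workers whose assignment differs is at most $\sum_{i=1}^w 2/(w-i+1) = O(\log w)$. -/

import Mathlib

open Finset

/-- The element of `A` minimizing the preference-rank function `f`
(the "most preferred" task of `A`); junk value if `A = ∅`. -/
noncomputable def argminTask {t : ℕ} (ht : 0 < t) (f : Fin t → ℕ) (A : Finset (Fin t)) :
    Fin t :=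
  if h : A.Nonempty then (A.exists_min_image f h).choose else ⟨0, ht⟩

/-- The set of `i`-remainder tasks of the greedy algorithm. -/
noncomputable def remainderTasks {t : ℕ} (ht : 0 < t) (σ : ℕ → Fin t → ℕ)
    (T : Finset (Fin t)) : ℕ → Finset (Fin t)
  | 0 => T
  | i + 1 =>
      (remainderTasks ht σ T i).erase
        (argminTask ht (σ i) (remainderTasks ht σ T i))

/-- The rank functions induced by a family `ρ` of preference permutations:
worker `i` prefers task `τ` over `τ'` iff `ρ i τ < ρ i τ'`. -/
noncomputable def rankOf {w t : ℕ} (ρ : Fin w → Equiv.Perm (Fin t)) : ℕ → Fin t → ℕ :=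
  fun i τ => if h : i < w then ((ρ ⟨i, h⟩) τ : ℕ) else (τ : ℕ)

/-- The task assigned to worker `i` (0-indexed) by the random-permutation algorithm with
preference permutations `ρ`, run on the task set `T`. -/
noncomputable def assignedTask {w t : ℕ} (ht : 0 < t) (ρ : Fin w → Equiv.Perm (Fin t))
    (T : Finset (Fin t)) (i : ℕ) : Fin t :=
  argminTask ht (rankOf ρ i) (remainderTasks ht (rankOf ρ) T i)

/-!
Fix the preferences of every worker but `i`. This fixes the sets `A` and `B` of tasks still
free when worker `i` moves in the two runs, and since each step erases the preferred task of
each set, `#(A \ B) ≤ 1` and `#(B \ A) ≤ 1` persist by induction. The two runs give worker `i`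
different tasks only if its favourite task in `A ∪ B` lies in `A ∆ B`, which has at most two
elements. Right multiplication by a transposition shows that under a uniform permutation each
element of `A ∪ B` is favourite equally often, and `#(A ∪ B) ≥ w - i`, so this happens with
probability at most `2 / (w - i)`. Summing over `i` gives twice a harmonic number.
-/

section Argmin

variable {t : ℕ} (ht : 0 < t) {f : Fin t → ℕ} {A B : Finset (Fin t)}

lemma argminTask_mem (hA : A.Nonempty) : argminTask ht f A ∈ A := by
  rw [argminTask, dif_pos hA]
  exact (A.exists_min_image f hA).choose_spec.1

lemma argminTask_le {x : Fin t} (hx : x ∈ A) : f (argminTask ht f A) ≤ f x := by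
  rw [argminTask, dif_pos ⟨x, hx⟩]
  exact (A.exists_min_image f ⟨x, hx⟩).choose_spec.2 x hx

lemma argminTask_eq_of_forall_le (hf : Function.Injective f) {b : Fin t} (hb : b ∈ A)
    (hmin : ∀ x ∈ A, f b ≤ f x) : argminTask ht f A = b :=
  hf <| le_antisymm (argminTask_le ht hb) (hmin _ (argminTask_mem ht ⟨b, hb⟩))

lemma argminTask_eq_of_subset (hf : Function.Injective f) (hAB : A ⊆ B)
    (hB : argminTask ht f B ∈ A) : argminTask ht f A = argminTask ht f B :=
  argminTask_eq_of_forall_le ht hf hB fun _ hx => argminTask_le ht (hAB hx)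

lemma card_sdiff_erase_argminTask_le (hf : Function.Injective f) (h : #(A \ B) ≤ 1) :
    #(A.erase (argminTask ht f A) \ B.erase (argminTask ht f B)) ≤ 1 := by
  set a := argminTask ht f A
  set b := argminTask ht f B
  -- Only `b` can newly enter the difference. If `a ∈ B` it cannot (`b ∈ A` would force
  -- `a = b`); otherwise `A \ B = {a}` and `a` has just been erased.
  by_cases haB : a ∈ B
  · refine (card_le_card fun c hc => ?_).trans h
    simp only [mem_sdiff, mem_erase, not_and] at hc ⊢
    refine ⟨hc.1.2, fun hcB => hc.1.1 ?_⟩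
    have hcb : c = b := by_contra fun hcb => hc.2 hcb hcB
    have hab : a = b := hf <| le_antisymm (argminTask_le ht (hcb ▸ hc.1.2)) (argminTask_le ht haB)
    rw [hcb, hab]
  · refine (card_le_card fun c hc => ?_).trans (card_singleton b).le
    simp only [mem_sdiff, mem_erase, not_and, mem_singleton] at hc ⊢
    refine by_contra fun hcb => hc.1.1 ?_
    exact card_le_one.1 h c (mem_sdiff.2 ⟨hc.1.2, hc.2 hcb⟩) a
      (mem_sdiff.2 ⟨argminTask_mem ht ⟨c, hc.1.2⟩, haB⟩)

end Argmin

section RemainderTasks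

variable {t : ℕ} (ht : 0 < t) (σ : ℕ → Fin t → ℕ) (T : Finset (Fin t))

lemma sub_le_card_remainderTasks (i : ℕ) : #T - i ≤ #(remainderTasks ht σ T i) := by
  induction i with
  | zero => simp [remainderTasks]
  | succ i ih => exact (Nat.sub_le_sub_right ih 1).trans pred_card_le_card_erase

lemma card_sdiff_remainderTasks_le (hσ : ∀ j, Function.Injective (σ j))
    {T₁ T₂ : Finset (Fin t)} (h : #(T₁ \ T₂) ≤ 1) (i : ℕ) :
    #(remainderTasks ht σ T₁ i \ remainderTasks ht σ T₂ i) ≤ 1 := by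
  induction i with
  | zero => exact h
  | succ i ih => exact card_sdiff_erase_argminTask_le ht (hσ i) ih

variable {σ} in
lemma remainderTasks_congr {σ' : ℕ → Fin t → ℕ} {i : ℕ} (h : ∀ j < i, σ j = σ' j) :
    remainderTasks ht σ T i = remainderTasks ht σ' T i := by
  induction i with
  | zero => rfl
  | succ i ih => rw [remainderTasks, remainderTasks, ih fun j hj => h j (by omega), h i (by omega)]

end RemainderTasks

section Permutations

open Equiv
open scoped symmDiff

variable {t : ℕ} (ht : 0 < t) {U : Finset (Fin t)}

lemma injective_val_perm (π : Perm (Fin t)) : Function.Injective (Fin.val ∘ π) :=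
  Fin.val_injective.comp π.injective

lemma argminTask_mul_swap {π : Perm (Fin t)} {u v : Fin t} (hu : u ∈ U) (hv : v ∈ U)
    (h : argminTask ht (Fin.val ∘ π) U = u) :
    argminTask ht (Fin.val ∘ (π * swap u v)) U = v := by
  refine argminTask_eq_of_forall_le ht (injective_val_perm _) hv fun x hx => ?_
  have hswap : swap u v x ∈ U := by
    rcases eq_or_ne x u with rfl | hxu
    · rwa [swap_apply_left]
    rcases eq_or_ne x v with rfl | hxv
    · rwa [swap_apply_right]
    · rwa [swap_apply_of_ne_of_ne hxu hxv]
  simpa [h] using argminTask_le ht (f := (Fin.val ∘ π)) hswap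

lemma card_filter_argminTask_eq_mul_card {u : Fin t} (hu : u ∈ U) :
    #{π : Perm (Fin t) | argminTask ht (Fin.val ∘ π) U = u} * #U =
      Fintype.card (Perm (Fin t)) := by
  have hfiber : ∀ v ∈ U, #{π : Perm (Fin t) | argminTask ht (Fin.val ∘ π) U = v} =
      #{π : Perm (Fin t) | argminTask ht (Fin.val ∘ π) U = u} := fun v hv => by
    refine card_bij' (fun π _ => π * swap u v) (fun π _ => π * swap u v) ?_ ?_ ?_ ?_ <;>
      simp only [mem_filter, mem_univ, true_and, mul_assoc, swap_mul_self, mul_one,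
        implies_true]
    · exact fun π hπ => swap_comm u v ▸ argminTask_mul_swap ht hv hu hπ
    · exact fun π hπ => argminTask_mul_swap ht hu hv hπ
  have hpartition : Fintype.card (Perm (Fin t)) =
      ∑ v ∈ U, #{π : Perm (Fin t) | argminTask ht (Fin.val ∘ π) U = v} :=
    card_eq_sum_card_fiberwise fun π _ => argminTask_mem ht ⟨u, hu⟩
  rw [hpartition, sum_congr rfl hfiber, sum_const, smul_eq_mul, mul_comm]

lemma card_filter_argminTask_ne_mul_card_union_le (A B : Finset (Fin t)) (hAB : #(A \ B) ≤ 1)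
    (hBA : #(B \ A) ≤ 1) :
    #{π : Perm (Fin t) | argminTask ht (Fin.val ∘ π) A ≠ argminTask ht (Fin.val ∘ π) B} *
      #(A ∪ B) ≤ 2 * Fintype.card (Perm (Fin t)) := by
  set U := A ∪ B
  rcases U.eq_empty_or_nonempty with hU | hU
  · simp [hU]
  have hsub : ({π : Perm (Fin t) | argminTask ht (Fin.val ∘ π) A ≠
      argminTask ht (Fin.val ∘ π) B} : Finset _) ⊆
      (A ∆ B).biUnion fun u => {π : Perm (Fin t) | argminTask ht (Fin.val ∘ π) U = u} := by
    intro π hπ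
    simp only [mem_filter, mem_univ, true_and, mem_biUnion, exists_eq_right'] at hπ ⊢
    by_contra hD
    have hmem :
        argminTask ht (Fin.val ∘ π) U ∈ A ∧ argminTask ht (Fin.val ∘ π) U ∈ B := by
      have hU' := argminTask_mem ht (f := (Fin.val ∘ π)) hU
      rw [mem_union] at hU'
      rw [mem_symmDiff] at hD
      tauto
    exact hπ <| (argminTask_eq_of_subset ht (injective_val_perm π) subset_union_left hmem.1).trans
      (argminTask_eq_of_subset ht (injective_val_perm π) subset_union_right hmem.2).symm
  have hD : #(A ∆ B) ≤ 2 := (card_union_le _ _).trans (by omega)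
  calc _ ≤ (∑ u ∈ A ∆ B, #{π : Perm (Fin t) | argminTask ht (Fin.val ∘ π) U = u}) *
        #U := Nat.mul_le_mul_right _ ((card_le_card hsub).trans card_biUnion_le)
    _ = #(A ∆ B) * Fintype.card (Perm (Fin t)) := by
      rw [sum_mul, sum_congr rfl fun u hu => card_filter_argminTask_eq_mul_card ht
        (symmDiff_subset_union hu), sum_const, smul_eq_mul]
    _ ≤ 2 * Fintype.card (Perm (Fin t)) := Nat.mul_le_mul_right _ hD

end Permutations

lemma card_filter_mul_card_eq_sum_card_filter_update {ι α : Type*} [Fintype ι] [DecidableEq ι]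
    [Fintype α] (p : (ι → α) → Prop) [DecidablePred p] (i : ι) :
    #{ρ | p ρ} * Fintype.card α = ∑ ρ : ι → α, #{x | p (Function.update ρ i x)} := by
  have hφ : Function.Involutive fun q : (ι → α) × α => (Function.update q.1 i q.2, q.1 i) :=
    fun q => by simp
  calc #{ρ | p ρ} * Fintype.card α
      = ∑ q : (ι → α) × α, if p q.1 then 1 else 0 := by
        rw [Fintype.sum_prod_type, sum_comm, card_filter]; simp [mul_comm]
    _ = ∑ q : (ι → α) × α, if p (Function.update q.1 i q.2) then 1 else 0 :=
        (Equiv.sum_comp (hφ.toPerm _) fun q : (ι → α) × α => if p q.1 then 1 else 0).symm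
    _ = ∑ ρ : ι → α, #{x | p (Function.update ρ i x)} := by
        simp only [Fintype.sum_prod_type, card_filter]

section Assignment

open Equiv

variable {w t : ℕ} (ht : 0 < t) (ρ : Fin w → Perm (Fin t)) (π : Perm (Fin t))
  {i : ℕ} (hi : i < w)

lemma rankOf_injective (j : ℕ) : Function.Injective (rankOf ρ j) := by
  unfold rankOf
  split_ifs
  · exact injective_val_perm _
  · exact Fin.val_injective

lemma rankOf_update_self : rankOf (Function.update ρ ⟨i, hi⟩ π) i = Fin.val ∘ π := by
  funext τ
  simp [rankOf, hi]

lemma rankOf_update_of_ne {j : ℕ} (hj : j ≠ i) :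
    rankOf (Function.update ρ ⟨i, hi⟩ π) j = rankOf ρ j := by
  funext τ
  unfold rankOf
  split_ifs with hjw
  · rw [Function.update_of_ne (by simpa [Fin.ext_iff] using hj)]
  · rfl

lemma assignedTask_update_self (T : Finset (Fin t)) :
    assignedTask ht (Function.update ρ ⟨i, hi⟩ π) T i =
      argminTask ht (Fin.val ∘ π) (remainderTasks ht (rankOf ρ) T i) := by
  rw [assignedTask, rankOf_update_self, remainderTasks_congr ht T fun j hj =>
    rankOf_update_of_ne ρ π hi hj.ne]

end Assignment

open Equiv in
lemma card_filter_assignedTask_ne_mul_le {w t : ℕ} (ht : 0 < t) {i : ℕ} (hi : i < w)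
    {T₁ T₂ : Finset (Fin t)} (hadj₁ : #(T₁ \ T₂) ≤ 1) (hadj₂ : #(T₂ \ T₁) ≤ 1) :
    #{ρ : Fin w → Perm (Fin t) | assignedTask ht ρ T₁ i ≠ assignedTask ht ρ T₂ i} *
      (#T₁ - i) ≤ 2 * Fintype.card (Fin w → Perm (Fin t)) := by
  set N := Fintype.card (Perm (Fin t))
  refine Nat.le_of_mul_le_mul_right ?_ (Fintype.card_pos : 0 < N)
  calc _ = ∑ ρ : Fin w → Perm (Fin t),
        #{π | assignedTask ht (Function.update ρ ⟨i, hi⟩ π) T₁ i ≠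
          assignedTask ht (Function.update ρ ⟨i, hi⟩ π) T₂ i} * (#T₁ - i) := by
        rw [mul_right_comm, card_filter_mul_card_eq_sum_card_filter_update _ ⟨i, hi⟩, sum_mul]
    _ ≤ ∑ _ρ : Fin w → Perm (Fin t), 2 * N := sum_le_sum fun ρ _ => by
        simp only [assignedTask_update_self]
        set A := remainderTasks ht (rankOf ρ) T₁ i
        set B := remainderTasks ht (rankOf ρ) T₂ i
        have hcard : #T₁ - i ≤ #(A ∪ B) :=
          (sub_le_card_remainderTasks ht _ T₁ i).trans (card_le_card subset_union_left)
        exact (Nat.mul_le_mul_left _ hcard).trans <|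
          card_filter_argminTask_ne_mul_card_union_le ht A B
            (card_sdiff_remainderTasks_le ht _ (rankOf_injective ρ) hadj₁ i)
            (card_sdiff_remainderTasks_le ht _ (rankOf_injective ρ) hadj₂ i)
    _ = 2 * Fintype.card (Fin w → Perm (Fin t)) * N := by
        rw [sum_const, card_univ, smul_eq_mul]; ring

lemma sum_range_two_div_sub_le (n : ℕ) :
    ∑ i ∈ range n, 2 / ((n : ℝ) - i) ≤ 2 * (Real.log n + 1) :=
  calc ∑ i ∈ range n, 2 / ((n : ℝ) - i)
      = ∑ i ∈ range n, 2 / ((i : ℝ) + 1) := by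
        rw [← sum_range_reflect]
        refine sum_congr rfl fun i hi => ?_
        have hi : i < n := mem_range.1 hi
        rw [Nat.cast_sub (by omega), Nat.cast_sub (by omega)]
        ring
    _ = 2 * (harmonic n : ℝ) := by simp [harmonic, mul_sum, div_eq_mul_inv]
    _ ≤ 2 * (Real.log n + 1) := by linarith [harmonic_le_one_add_log n]

theorem random_permutation_expected_switching_cost_general (w t : ℕ) (ht : 0 < t)
    (T₁ T₂ : Finset (Fin t)) (h₁ : T₁.card = w)
    (hadj₁ : (T₁ \ T₂).card = 1) (hadj₂ : (T₂ \ T₁).card = 1) :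
    (∀ i : ℕ, i < w →
      ((Finset.univ.filter (fun ρ : Fin w → Equiv.Perm (Fin t) =>
          assignedTask ht ρ T₁ i ≠ assignedTask ht ρ T₂ i)).card : ℝ) /
        (Fintype.card (Fin w → Equiv.Perm (Fin t)) : ℝ) ≤ 2 / ((w : ℝ) - i)) ∧
    (∑ ρ : Fin w → Equiv.Perm (Fin t),
        ((Finset.univ.filter (fun i : Fin w =>
            assignedTask ht ρ T₁ i ≠ assignedTask ht ρ T₂ i)).card : ℝ)) /
        (Fintype.card (Fin w → Equiv.Perm (Fin t)) : ℝ)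
      ≤ ∑ i ∈ Finset.range w, 2 / ((w : ℝ) - i) ∧
    ∑ i ∈ Finset.range w, 2 / ((w : ℝ) - i) ≤ 2 * (Real.log w + 1) := by
  have hprob (i : ℕ) (hi : i < w) :
      (#{ρ : Fin w → Equiv.Perm (Fin t) |
          assignedTask ht ρ T₁ i ≠ assignedTask ht ρ T₂ i} : ℝ) /
        Fintype.card (Fin w → Equiv.Perm (Fin t)) ≤ 2 / ((w : ℝ) - i) := by
    have hcount := card_filter_assignedTask_ne_mul_le ht hi hadj₁.le hadj₂.le
    rw [h₁] at hcount
    rw [div_le_div_iff₀ (by simp [Fintype.card_pos]) (by simpa using hi), ← Nat.cast_sub hi.le]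
    exact_mod_cast hcount
  refine ⟨hprob, ?_, sum_range_two_div_sub_le w⟩
  calc _ = ∑ i : Fin w, (#{ρ : Fin w → Equiv.Perm (Fin t) |
          assignedTask ht ρ T₁ i ≠ assignedTask ht ρ T₂ i} : ℝ) /
          Fintype.card (Fin w → Equiv.Perm (Fin t)) := by
        simp only [← sum_div, card_filter, Nat.cast_sum]
        rw [sum_comm]
    _ ≤ ∑ i : Fin w, 2 / ((w : ℝ) - i) := sum_le_sum fun i _ => hprob i i.isLt
    _ = ∑ i ∈ range w, 2 / ((w : ℝ) - i) :=
        Fin.sum_univ_eq_sum_range (fun i => 2 / ((w : ℝ) - i)) w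

/-- with independent uniformly random preference permutations, for adjacent
task sets `T₁, T₂` of size `w`, (i) the probability that worker `i` (0-indexed) is assigned
different tasks in the two runs is at most `2/(w-i)`, and (ii) the expected number of
workers whose assignment differs is at most `∑_{i<w} 2/(w-i)`, which is `O(log w)`. -/
theorem random_permutation_expected_switching_cost (w t : ℕ) (ht : 0 < t) (hw : 0 < w)
    (T₁ T₂ : Finset (Fin t)) (h₁ : T₁.card = w) (h₂ : T₂.card = w)
    (hadj₁ : (T₁ \ T₂).card = 1) (hadj₂ : (T₂ \ T₁).card = 1) :
    (∀ i : ℕ, i < w →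
      ((Finset.univ.filter (fun ρ : Fin w → Equiv.Perm (Fin t) =>
          assignedTask ht ρ T₁ i ≠ assignedTask ht ρ T₂ i)).card : ℝ) /
        (Fintype.card (Fin w → Equiv.Perm (Fin t)) : ℝ) ≤ 2 / ((w : ℝ) - i)) ∧
    (∑ ρ : Fin w → Equiv.Perm (Fin t),
        ((Finset.univ.filter (fun i : Fin w =>
            assignedTask ht ρ T₁ i ≠ assignedTask ht ρ T₂ i)).card : ℝ)) /
        (Fintype.card (Fin w → Equiv.Perm (Fin t)) : ℝ)
      ≤ ∑ i ∈ Finset.range w, 2 / ((w : ℝ) - i) ∧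
    ∑ i ∈ Finset.range w, 2 / ((w : ℝ) - i) ≤ 2 * (Real.log w + 1) :=
  random_permutation_expected_switching_cost_general w t ht T₁ T₂ h₁ hadj₁ hadj₂
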